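/- Let θ ∈ ℤ_p be neither zero nor a negative rational integer, and let θ' ∈ ℚ ∩ ℤ_p be the unique element such that pθ'−θ is an integer in [0, p−1]. Let m and s be positive integers. Then there exists u ∈ 1 + [p^{s+1}]_q·R such that, in Q, C_θ(mp^{s+1})/φ(C_{θ'}(mp^s)) = u · C_1(mp^{s+1})/φ(C_1(mp^s)). -/

import Mathlib

/- Setting (following Dwork-type q-congruences / q-hypergeometric papers):
`p` is an odd prime, `R = ℤ_p[[q−1]]` is implemented as `PowerSeries ℤ_[p]`, the power-series
variable `PowerSeries.X` standing for `q − 1`. -/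

noncomputable section
open PowerSeries
namespace QDwork

variable (p : ℕ) [Fact p.Prime]

/-- `R = ℤ_p[[q−1]]`. -/
abbrev R : Type := PowerSeries ℤ_[p]

/-- `q = 1 + (q−1) ∈ R`. -/
def qq : R p := 1 + PowerSeries.X

/-- `q^a = Σ_{i≥0} binom(a,i)(q−1)^i ∈ R` for `a ∈ ℤ_p`, using the p-adically interpolated
binomial coefficients `Ring.choose` (`ℤ_p` is a binomial ring). -/
def qpow (a : ℤ_[p]) : R p := PowerSeries.mk fun i => Ring.choose a i

/-- The q-number `[a]_q = (q^a−1)/(q−1) = Σ_{i≥1} binom(a,i)(q−1)^{i−1} ∈ R` for `a ∈ ℤ_p`. -/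
def qnum (a : ℤ_[p]) : R p := PowerSeries.mk fun i => Ring.choose a (i + 1)

/-- The q-number `[n]_q = 1 + q + ⋯ + q^{n−1} ∈ R` of a natural number `n`. -/
def qnat (n : ℕ) : R p := ∑ i ∈ Finset.range n, qq p ^ i

/-- The Frobenius endomorphism `φ` of `R = ℤ_p[[q−1]]`: the ring endomorphism fixing `ℤ_p`
with `φ(q) = q^p`, i.e. the substitution `f(q−1) ↦ f(q^p−1)` (legitimate since `q^p−1` has
zero constant term), described here through its coefficients. -/
def phiR (f : R p) : R p :=
  PowerSeries.mk fun n => ∑ i ∈ Finset.range (n + 1),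
    PowerSeries.coeff i f * PowerSeries.coeff n ((qq p ^ p - 1) ^ i)

/-- `Q = Frac(R)`. -/
abbrev Q : Type := FractionRing (R p)

/-- The canonical injection `R → Q`. -/
def ι : R p →+* Q p := algebraMap (R p) (Q p)

/-- `q ∈ Q`. -/
def qQ : Q p := ι p (qq p)

/-- `C_θ(n) = ∏_{ν=0}^{n−1} [θ+ν]_q ∈ R`. -/
def Cq (θ : ℤ_[p]) (n : ℕ) : R p := ∏ ν ∈ Finset.range n, qnum p (θ + (ν : ℤ_[p]))

/-! Write `n = mp^s` and split `C_θ(np)` into the product `U_θ` of the factors `[θ+ν]_q` with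
`θ+ν` a `p`-adic unit and the rest. The rest are the `ν = a₀ + pμ`, and
`[θ+a₀+pμ]_q = [p(θ'+μ)]_q = [p]_q·φ([θ'+μ]_q)` because `φ(q^a) = q^{pa}`; this holds for `a ∈ ℕ`,
hence for all `a ∈ ℤ_p` since the coefficients of both sides are polynomial in `a`. So
`C_θ(np) = U_θ·[p]_q^n·φ(C_{θ'}(n))`, and likewise for `θ = 1`.
Modulo `[p^{s+1}]_q`, both `[a]_q` and whether `a` is a unit depend only on `a mod p^{s+1}`; writing
`θ ≡ 1 + t`, the factors of `U_θ` are those of `U_1` shifted cyclically by `t`, so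
`U_θ ≡ U_1 mod [p^{s+1}]_q`. Since `U_1` is a unit, `u = U_θ / U_1` works. -/

lemma _root_.Ring.choose_natCast_mul_eq_sum {A : Type*} [CommRing A] [IsDomain A] [CharZero A]
    [BinomialRing A] (k n : ℕ) (c : ℕ → A)
    (h : ∀ j : ℕ, Ring.choose ((k * j : ℕ) : A) n =
      ∑ i ∈ Finset.range (n + 1), c i * Ring.choose (j : A) i)
    (a : A) : Ring.choose (k * a) n = ∑ i ∈ Finset.range (n + 1), c i * Ring.choose a i := by
  let D : ℕ → Polynomial A := fun i ↦ (descPochhammer ℤ i).map (Int.castRingHom A)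
  have eval_D (i : ℕ) (x : A) : (D i).eval x = i.factorial * Ring.choose x i := by
    rw [Polynomial.eval_map, ← algebraMap_int_eq, ← Polynomial.aeval_def,
      Polynomial.aeval_eq_smeval, Ring.descPochhammer_eq_factorial_smul_choose, nsmul_eq_mul]
  let L : Polynomial A := (D n).comp (Polynomial.C (k : A) * Polynomial.X)
  let Rt : Polynomial A := ∑ i ∈ Finset.range (n + 1),
    Polynomial.C (c i * ((n.factorial / i.factorial : ℕ) : A)) * D i
  have eval_L (x : A) : L.eval x = n.factorial * Ring.choose (k * x) n := by
    simp [L, eval_D]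
  have eval_Rt (x : A) :
      Rt.eval x = n.factorial * ∑ i ∈ Finset.range (n + 1), c i * Ring.choose x i := by
    simp only [Rt, Polynomial.eval_finsetSum, Polynomial.eval_mul, Polynomial.eval_C, eval_D,
      Finset.mul_sum]
    refine Finset.sum_congr rfl fun i hi ↦ ?_
    have hdvd := Nat.factorial_dvd_factorial (Nat.lt_succ_iff.mp (Finset.mem_range.mp hi))
    have hfac : ((n.factorial / i.factorial : ℕ) : A) * i.factorial = n.factorial := by
      rw [← Nat.cast_mul, Nat.div_mul_cancel hdvd]
    rw [← hfac]
    ring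
  have hLR : L = Rt := Polynomial.eq_of_infinite_eval_eq _ _ <|
    (Set.infinite_range_of_injective Nat.cast_injective).mono <| by
      rintro _ ⟨j, rfl⟩
      simp only [Set.mem_ofPred_eq, eval_L, eval_Rt, ← h j]
      push_cast
      rfl
  have := congrArg (Polynomial.eval a) hLR
  rw [eval_L, eval_Rt] at this
  exact mul_left_cancel₀ (Nat.cast_ne_zero.mpr n.factorial_ne_zero) this

lemma _root_.Function.Periodic.prod_range_add {M : Type*} [CommMonoid M] {g : ℕ → M} {N : ℕ}
    (hg : Function.Periodic g N) (t : ℕ) :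
    ∏ ν ∈ Finset.range N, g (ν + t) = ∏ ν ∈ Finset.range N, g ν := by
  induction t with
  | zero => rfl
  | succ t ih =>
    rw [← ih]
    rcases N with _ | N
    · rfl
    rw [Finset.prod_range_succ, Finset.prod_range_succ' (fun ν ↦ g (ν + t)), zero_add, ← hg t]
    congr 1
    · exact Finset.prod_congr rfl fun ν _ ↦ by rw [add_right_comm, add_assoc]
    · congr 1
      omega

lemma _root_.exists_eq_one_add_mul_mul_of_dvd_sub {A : Type*} [CommRing A] {a b g : A}
    (hb : IsUnit b) (h : g ∣ a - b) : ∃ r, a = (1 + g * r) * b := by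
  obtain ⟨c, hc⟩ := h
  obtain ⟨v, rfl⟩ := hb
  exact ⟨c * ↑v⁻¹, by rw [add_mul, mul_assoc, mul_assoc, Units.inv_mul, mul_one, ← hc]; ring⟩

lemma _root_.PadicInt.isUnit_iff_toZMod_ne_zero (x : ℤ_[p]) :
    IsUnit x ↔ PadicInt.toZMod x ≠ 0 := by
  rw [Ne, ← RingHom.mem_ker, PadicInt.ker_toZMod, IsLocalRing.mem_maximalIdeal, mem_nonunits_iff,
    not_not]

lemma qpow_eq_binomialSeries (a : ℤ_[p]) : qpow p a = binomialSeries ℤ_[p] a := by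
  ext n
  simp [qpow]

lemma qpow_natCast (n : ℕ) : qpow p n = qq p ^ n := by
  rw [qpow_eq_binomialSeries, binomialSeries_nat, qq]

lemma qnum_mul_X (a : ℤ_[p]) : qnum p a * X = qpow p a - 1 := by
  ext (_ | n)
  · simp [qpow]
  · simp [qnum, qpow, coeff_succ_mul_X, coeff_one]

lemma qnat_mul_X (n : ℕ) : qnat p n * X = qq p ^ n - 1 := by
  rw [qnat, ← geom_sum_mul, qq, add_sub_cancel_left]

lemma constantCoeff_qnum (a : ℤ_[p]) : constantCoeff (qnum p a) = a := by
  simp [qnum, ← coeff_zero_eq_constantCoeff_apply]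

lemma qnum_ne_zero {a : ℤ_[p]} (ha : a ≠ 0) : qnum p a ≠ 0 := fun h ↦
  ha (by simpa [h] using (constantCoeff_qnum p a).symm)

lemma qnum_sub_qnum (a b : ℤ_[p]) : qnum p a - qnum p b = qpow p b * qnum p (a - b) :=
  mul_right_cancel₀ X_ne_zero <| by
    rw [sub_mul, mul_assoc, qnum_mul_X, qnum_mul_X, qnum_mul_X, mul_sub, qpow_eq_binomialSeries,
      qpow_eq_binomialSeries, qpow_eq_binomialSeries, ← binomialSeries_add, add_sub_cancel]
    ring

lemma constantCoeff_qq_pow_sub_one (k : ℕ) : constantCoeff (qq p ^ k - 1) = 0 := by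
  simp [qq]

def frob (k : ℕ) : R p →ₐ[ℤ_[p]] R p :=
  substAlgHom (HasSubst.of_constantCoeff_zero' (constantCoeff_qq_pow_sub_one p k))

lemma frob_X (k : ℕ) : frob p k X = qq p ^ k - 1 := substAlgHom_X _

lemma frob_qq (k : ℕ) : frob p k (qq p) = qq p ^ k := by
  rw [qq, map_add, map_one, frob_X, ← qq, add_sub_cancel]

lemma coeff_frob (k n : ℕ) (f : R p) :
    coeff n (frob p k f) =
      ∑ i ∈ Finset.range (n + 1), coeff i f * coeff n ((qq p ^ k - 1) ^ i) := by
  rw [frob, coe_substAlgHom,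
    coeff_subst' (HasSubst.of_constantCoeff_zero' (constantCoeff_qq_pow_sub_one p k))]
  refine finsum_eq_sum_of_support_subset _ fun d hd ↦ ?_
  rw [Finset.coe_range, Set.mem_Iio, Nat.lt_succ_iff]
  by_contra! hnd
  have hdvd : X ^ d ∣ (qq p ^ k - 1) ^ d :=
    pow_dvd_pow_of_dvd (X_dvd_iff.mpr (constantCoeff_qq_pow_sub_one p k)) d
  exact hd (by simp only [X_pow_dvd_iff.mp hdvd n hnd, smul_zero])

lemma phiR_eq_frob (f : R p) : phiR p f = frob p p f := by
  ext n
  rw [coeff_frob, phiR, coeff_mk]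

lemma frob_qpow (k : ℕ) (a : ℤ_[p]) : frob p k (qpow p a) = qpow p (k * a) := by
  ext n
  have coeff_frob_qpow (b : ℤ_[p]) : coeff n (frob p k (qpow p b)) =
      ∑ i ∈ Finset.range (n + 1), coeff n ((qq p ^ k - 1) ^ i) * Ring.choose b i := by
    simp only [coeff_frob, qpow, coeff_mk, mul_comm]
  rw [coeff_frob_qpow, qpow, coeff_mk]
  refine (Ring.choose_natCast_mul_eq_sum k n _ (fun j ↦ ?_) a).symm
  rw [← coeff_frob_qpow, qpow_natCast, map_pow, frob_qq, ← pow_mul, ← qpow_natCast, qpow, coeff_mk]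

lemma qnat_mul_frob_qnum (k : ℕ) (a : ℤ_[p]) :
    qnat p k * frob p k (qnum p a) = qnum p (k * a) :=
  mul_right_cancel₀ X_ne_zero <| calc
    qnat p k * frob p k (qnum p a) * X = frob p k (qnum p a) * frob p k X := by
      rw [frob_X, ← qnat_mul_X]; ring
    _ = qnum p (k * a) * X := by
      rw [← map_mul, qnum_mul_X, map_sub, map_one, frob_qpow, qnum_mul_X]

lemma qnat_dvd_qnum_sub_qnum (M : ℕ) {a b : ℤ_[p]} (h : (M : ℤ_[p]) ∣ a - b) :
    qnat p M ∣ qnum p a - qnum p b := by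
  obtain ⟨c, hc⟩ := h
  rw [qnum_sub_qnum, hc, ← qnat_mul_frob_qnum]
  exact ⟨qpow p b * frob p M (qnum p c), by ring⟩

open Classical in
def CqUnitPart (θ : ℤ_[p]) (N : ℕ) : R p :=
  ∏ ν ∈ (Finset.range N).filter (fun ν : ℕ ↦ IsUnit (θ + ν)), qnum p (θ + ν)

open Classical in
lemma isUnit_CqUnitPart (θ : ℤ_[p]) (N : ℕ) : IsUnit (CqUnitPart p θ N) := by
  refine IsUnit.prod_iff.mpr fun ν hν ↦ ?_
  rw [isUnit_iff_constantCoeff, constantCoeff_qnum]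
  exact (Finset.mem_filter.mp hν).2

lemma not_isUnit_add_natCast_iff {θ θ' : ℤ_[p]} {a₀ : ℕ} (ha₀ : a₀ < p)
    (hrel : θ + a₀ = p * θ') (ν : ℕ) : ¬IsUnit (θ + ν) ↔ ν % p = a₀ := by
  have hθ : PadicInt.toZMod θ = -a₀ := by
    have := congrArg PadicInt.toZMod hrel
    rw [map_add, map_mul, map_natCast, map_natCast, ZMod.natCast_self, zero_mul] at this
    exact eq_neg_of_add_eq_zero_left this
  rw [PadicInt.isUnit_iff_toZMod_ne_zero, not_not, map_add, hθ, map_natCast, neg_add_eq_zero,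
    ZMod.natCast_eq_natCast_iff', Nat.mod_eq_of_lt ha₀, eq_comm]

lemma Cq_ne_zero {θ : ℤ_[p]} {n : ℕ} (h : ∀ ν < n, θ + ν ≠ 0) : Cq p θ n ≠ 0 :=
  Finset.prod_ne_zero_iff.mpr fun ν hν ↦ qnum_ne_zero p (h ν (Finset.mem_range.mp hν))

open Classical in
lemma Cq_mul_p_eq {θ θ' : ℤ_[p]} {a₀ : ℕ} (ha₀ : a₀ < p) (hrel : θ + a₀ = p * θ') (n : ℕ) :
    Cq p θ (n * p) = CqUnitPart p θ (n * p) * (qnat p p ^ n * frob p p (Cq p θ' n)) := by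
  have hp : 0 < p := (Fact.out : p.Prime).pos
  have mem_nonunits (ν : ℕ) :
      ν ∈ (Finset.range (n * p)).filter (fun ν : ℕ ↦ ¬IsUnit (θ + ν)) ↔
        ν < n * p ∧ ν % p = a₀ := by
    rw [Finset.mem_filter, Finset.mem_range, not_isUnit_add_natCast_iff p ha₀ hrel]
  rw [Cq, ← Finset.prod_filter_mul_prod_filter_not _ (fun ν : ℕ ↦ IsUnit (θ + ν)), CqUnitPart]
  congr 1
  calc _ = ∏ μ ∈ Finset.range n, qnum p (θ + (a₀ + p * μ : ℕ)) := by
        refine Finset.prod_nbij' (· / p) (a₀ + p * ·) (fun ν hν ↦ ?_) (fun μ hμ ↦ ?_)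
          (fun ν hν ↦ ?_) (fun μ _ ↦ ?_) (fun ν hν ↦ ?_)
        all_goals simp only [mem_nonunits, Finset.mem_range] at *
        · exact (Nat.div_lt_iff_lt_mul hp).mpr hν.1
        · rw [Nat.add_mul_mod_self_left, Nat.mod_eq_of_lt ha₀]
          refine ⟨?_, rfl⟩
          nlinarith
        · have := Nat.mod_add_div ν p
          omega
        · rw [Nat.add_mul_div_left _ _ hp, Nat.div_eq_of_lt ha₀, zero_add]
        · have := Nat.mod_add_div ν p
          rw [show a₀ + p * (ν / p) = ν by omega]
    _ = ∏ μ ∈ Finset.range n, qnat p p * frob p p (qnum p (θ' + μ)) := by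
        refine Finset.prod_congr rfl fun μ _ ↦ ?_
        rw [qnat_mul_frob_qnum]
        congr 1
        push_cast
        linear_combination hrel
    _ = qnat p p ^ n * frob p p (Cq p θ' n) := by
        rw [Finset.prod_mul_distrib, Finset.prod_const, Finset.card_range, Cq, map_prod]

open Classical in
lemma qnat_dvd_CqUnitPart_sub_CqUnitPart (θ θ₀ : ℤ_[p]) {s N : ℕ} (hN : p ^ (s + 1) ∣ N) :
    qnat p (p ^ (s + 1)) ∣ CqUnitPart p θ N - CqUnitPart p θ₀ N := by
  set M := p ^ (s + 1)
  let π := Ideal.Quotient.mk (Ideal.span {qnat p M})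
  let g : ℤ_[p] → R p ⧸ Ideal.span {qnat p M} := fun a ↦ if IsUnit a then π (qnum p a) else 1
  have hg {a b : ℤ_[p]} (h : (M : ℤ_[p]) ∣ a - b) : g a = g b := by
    have hunit : IsUnit a ↔ IsUnit b := by
      obtain ⟨c, hc⟩ := h
      have hM : PadicInt.toZMod (M : ℤ_[p]) = 0 := by
        rw [map_natCast, Nat.cast_pow, ZMod.natCast_self, zero_pow s.succ_ne_zero]
      rw [PadicInt.isUnit_iff_toZMod_ne_zero, PadicInt.isUnit_iff_toZMod_ne_zero,
        ← sub_add_cancel a b, map_add, hc, map_mul, hM, zero_mul, zero_add]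
    simp only [g, hunit]
    split_ifs
    · exact Ideal.Quotient.eq.mpr (Ideal.mem_span_singleton.mpr (qnat_dvd_qnum_sub_qnum p M h))
    · rfl
  have hπ (θ : ℤ_[p]) : π (CqUnitPart p θ N) = ∏ ν ∈ Finset.range N, g (θ + ν) := by
    rw [CqUnitPart, Finset.prod_filter, map_prod]
    refine Finset.prod_congr rfl fun ν _ ↦ ?_
    simp only [g]
    split_ifs <;> simp
  obtain ⟨t, ht⟩ : ∃ t : ℕ, (M : ℤ_[p]) ∣ θ - θ₀ - t := ⟨(θ - θ₀).appr (s + 1), by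
    simpa [M, Ideal.mem_span_singleton] using PadicInt.appr_spec (s + 1) (θ - θ₀)⟩
  have hperiodic : Function.Periodic (fun ν : ℕ ↦ g (θ₀ + ν)) N := fun ν ↦
    hg (by simpa [add_sub_add_left_eq_sub] using Nat.cast_dvd_cast hN)
  rw [← Ideal.mem_span_singleton, ← Ideal.Quotient.eq, hπ, hπ, ← hperiodic.prod_range_add t]
  exact Finset.prod_congr rfl fun ν _ ↦ hg (by convert ht using 1; push_cast; ring)

theorem dwork_congruence_1_2 (θ θ' : ℤ_[p])
    (hθ : ∀ n : ℕ, θ + (n : ℤ_[p]) ≠ 0)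
    (a₀ : ℕ) (ha₀ : a₀ ≤ p - 1) (hθ' : (p : ℤ_[p]) * θ' - θ = (a₀ : ℤ_[p]))
    (m s : ℕ) :
    ∃ u r : R p, u = 1 + qnat p (p ^ (s + 1)) * r ∧
      ι p (Cq p θ (m * p ^ (s + 1))) / ι p (phiR p (Cq p θ' (m * p ^ s))) =
        ι p u * ι p (Cq p 1 (m * p ^ (s + 1))) / ι p (phiR p (Cq p 1 (m * p ^ s))) := by
  have hp : 0 < p := (Fact.out : p.Prime).pos
  set n := m * p ^ s
  have hN : m * p ^ (s + 1) = n * p := by ring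
  have hfac := Cq_mul_p_eq p (θ := θ) (θ' := θ') (a₀ := a₀) (by omega)
    (by linear_combination -hθ') n
  have hfac₁ := Cq_mul_p_eq p (θ := 1) (θ' := 1) (a₀ := p - 1) (by omega)
    (by rw [Nat.cast_sub hp]; ring) n
  obtain ⟨r, hr⟩ := exists_eq_one_add_mul_mul_of_dvd_sub (isUnit_CqUnitPart p 1 (n * p))
    (qnat_dvd_CqUnitPart_sub_CqUnitPart p θ 1 (s := s) (N := n * p) ⟨m, by ring⟩)
  have hι : Function.Injective (ι p) := IsFractionRing.injective (R p) (Q p)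
  have hne : ι p (frob p p (Cq p θ' n)) ≠ 0 := by
    refine (map_ne_zero_iff _ hι).mpr ?_
    exact right_ne_zero_of_mul (right_ne_zero_of_mul (hfac ▸ Cq_ne_zero p fun ν _ ↦ hθ ν))
  have hne₁ : ι p (frob p p (Cq p 1 n)) ≠ 0 := by
    refine (map_ne_zero_iff _ hι).mpr ?_
    refine right_ne_zero_of_mul (right_ne_zero_of_mul (hfac₁ ▸ Cq_ne_zero p fun ν _ ↦ ?_))
    rw [add_comm]
    exact_mod_cast ν.succ_ne_zero
  refine ⟨_, r, rfl, ?_⟩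
  rw [hN, phiR_eq_frob, phiR_eq_frob, hfac, hfac₁, hr]
  simp only [map_mul]
  field_simp

end QDwork
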